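/- Let 1 < q < 2 and r > 0. There exists C_{q,r} > 0 depending only on q and r such that for every R > 0, wℓ_q(R) ∩ B^r_{2,∞}(R) ⊆ B_{q,r}(C_{q,r} R); in particular, since L_q(R) ⊆ wℓ_q(R), also L_q(R) ∩ B^r_{2,∞}(R) ⊆ B_{q,r}(C_{q,r} R). -/

import Mathlib

open MeasureTheory Real

noncomputable section

/-- Membership in the linear span of the truncated dictionary `{φ 0, …, φ (p-1)}`
(representing `{φ_1, …, φ_p}`). -/
def L1set {H : Type*} [AddCommGroup H] [Module ℝ H] (φ : ℕ → H) (p : ℕ) : Set H :=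
  {h | ∃ θ : Fin p → ℝ, h = ∑ j, θ j • φ (j : ℕ)}

/-- The ℓ¹ norm with respect to the truncated dictionary. -/
def l1norm {H : Type*} [AddCommGroup H] [Module ℝ H] (φ : ℕ → H) (p : ℕ) (h : H) : ℝ :=
  sInf {s : ℝ | ∃ θ : Fin p → ℝ, h = ∑ j, θ j • φ (j : ℕ) ∧ s = ∑ j, |θ j|}

/-- Membership in the space `L_{1,r}`. -/
def memL1r {H : Type*} [NormedAddCommGroup H] [InnerProductSpace ℝ H]
    (φ : ℕ → H) (r : ℝ) (g : H) : Prop :=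
  ∃ C : ℝ, 0 < C ∧ ∀ p : ℕ, 1 ≤ p →
    ∃ gp ∈ L1set φ p, l1norm φ p gp ≤ C ∧ ‖g - gp‖ ≤ C * (p : ℝ) ^ (-r)

/-- The norm of the space `L_{1,r}` (the smallest admissible constant `C`). -/
def l1rnorm {H : Type*} [NormedAddCommGroup H] [InnerProductSpace ℝ H]
    (φ : ℕ → H) (r : ℝ) (g : H) : ℝ :=
  sInf {C : ℝ | 0 < C ∧ ∀ p : ℕ, 1 ≤ p →
    ∃ gp ∈ L1set φ p, l1norm φ p gp ≤ C ∧ ‖g - gp‖ ≤ C * (p : ℝ) ^ (-r)}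

/-- Membership in the interpolation space `B_{q,r}(R)`. -/
def memBqr {H : Type*} [NormedAddCommGroup H] [InnerProductSpace ℝ H]
    (φ : ℕ → H) (q r R : ℝ) (g : H) : Prop :=
  ∀ δ : ℝ, 0 < δ →
    (⨅ h : {h : H // memL1r φ r h}, (‖g - (h : H)‖ + δ * l1rnorm φ r (h : H))) ≤
      R * δ ^ (2 * (1 / q - 1 / 2))

/-- Membership in the strong `L_q(R)` ball, in terms of the coefficients on the
orthonormal basis `φ`. -/
def inLq {H : Type*} [NormedAddCommGroup H] [InnerProductSpace ℝ H]
    (φ : ℕ → H) (q R : ℝ) (g : H) : Prop :=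
  Summable (fun j => |(inner ℝ (φ j) g : ℝ)| ^ q) ∧
    ∑' j : ℕ, |(inner ℝ (φ j) g : ℝ)| ^ q ≤ R ^ q

/-- Membership in the weak `wℓ_q(R)` ball, in terms of the coefficients on the
orthonormal basis `φ`. -/
def inwlq {H : Type*} [NormedAddCommGroup H] [InnerProductSpace ℝ H]
    (φ : ℕ → H) (q R : ℝ) (g : H) : Prop :=
  ∀ η : ℝ, 0 < η → {j : ℕ | η < |(inner ℝ (φ j) g : ℝ)|}.Finite ∧
    η ^ q * ({j : ℕ | η < |(inner ℝ (φ j) g : ℝ)|}.ncard : ℝ) ≤ R ^ q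

/-- Membership in the Besov ball `B^r_{2,∞}(R)`, in terms of the coefficients on the
orthonormal basis `φ` (here `φ j` stands for `φ_{j+1}`, `j ∈ ℕ`). -/
def inBesov {H : Type*} [NormedAddCommGroup H] [InnerProductSpace ℝ H]
    (φ : ℕ → H) (r R : ℝ) (g : H) : Prop :=
  ∀ J : ℕ, ((J : ℝ) + 1) ^ (2 * r) *
      (∑' j : ℕ, if J ≤ j then (inner ℝ (φ j) g : ℝ) ^ 2 else 0) ≤ R ^ 2

/-!
Write `θ j = ⟪φ j, g⟫`. For `δ ≥ 1` the approximant `0` suffices, since `‖g‖ ≤ R` by Parseval.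
For `δ < 1` take `h = ∑ θ j • φ j` over the indices `j < p` with `|θ j| > η`, where
`η = R δ ^ (2 / q)`, `p ≈ δ ^ (-e / r)` and `e = 2 / q - 1`. Summing the weak-`ℓ_q` bound
`#{j | t < |θ j|} ≤ R ^ q t ^ (-q)` over dyadic shells gives
`∑_{|θ j| > η} |θ j| ≲ R ^ q η ^ (1 - q)` and `∑_{|θ j| ≤ η} θ j ^ 2 ≲ R ^ q η ^ (2 - q)`. Together with the Besov tail
`∑_{j ≥ p} θ j ^ 2 ≤ R ^ 2 p ^ (-2 r)` this gives `‖g - h‖ ≲ R δ ^ e` and, since the truncations of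
`h` are again such partial sums, `‖h‖_{L_{1,r}} ≲ R δ ^ (e - 1)`.
-/

open Finset

section WeakLq

variable {ι : Type*} {s : Finset ι} {a : ι → ℝ} {A q η : ℝ}

lemma two_pow_log_floor_le {x : ℝ} (hx : 1 ≤ x) : (2 : ℝ) ^ Nat.log 2 ⌊x⌋₊ ≤ x := by
  have := Int.zpow_log_le_self (b := 2) one_lt_two (zero_lt_one.trans_le hx)
  rwa [Int.log_of_one_le_right 2 hx, zpow_natCast, Nat.cast_ofNat] at this

lemma lt_two_pow_log_floor_succ {x : ℝ} (hx : 1 ≤ x) : x < 2 ^ (Nat.log 2 ⌊x⌋₊ + 1) := by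
  have := Int.lt_zpow_succ_log_self (b := 2) one_lt_two x
  rwa [Int.log_of_one_le_right 2 hx, ← Nat.cast_succ, zpow_natCast, Nat.cast_ofNat] at this

lemma sum_le_of_sum_fiber_le_geometric (k : ι → ℕ) {f : ι → ℝ} {D x : ℝ} (hD : 0 ≤ D)
    (hx0 : 0 ≤ x) (hx1 : x < 1) (h : ∀ m, ∑ j ∈ s with k j = m, f j ≤ D * x ^ m) :
    ∑ j ∈ s, f j ≤ D / (1 - x) := by
  classical
  calc ∑ j ∈ s, f j = ∑ m ∈ s.image k, ∑ j ∈ s with k j = m, f j :=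
        (sum_fiberwise_of_maps_to (fun j hj => mem_image_of_mem k hj) f).symm
    _ ≤ ∑ m ∈ s.image k, D * x ^ m := sum_le_sum fun m _ => h m
    _ ≤ ∑' m, D * x ^ m :=
        Summable.sum_le_tsum _ (fun m _ => by positivity)
          ((summable_geometric_of_lt_one hx0 hx1).mul_left D)
    _ = D / (1 - x) := by rw [tsum_mul_left, tsum_geometric_of_lt_one hx0 hx1, div_eq_mul_inv]

lemma sum_filter_le_card_filter_mul {p : ι → Prop} [DecidablePred p] {f : ι → ℝ} {t c : ℝ}
    (hc : 0 ≤ c) (hf : ∀ j ∈ s, p j → f j ≤ if t < a j then c else 0) :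
    ∑ j ∈ s with p j, f j ≤ #{j ∈ s | t < a j} * c := by
  have hnonneg : ∀ j, 0 ≤ if t < a j then c else 0 := fun j => by split_ifs <;> simp [hc]
  calc ∑ j ∈ s with p j, f j ≤ ∑ j ∈ s with p j, (if t < a j then c else 0) :=
        sum_le_sum fun j hj => hf j (mem_filter.1 hj).1 (mem_filter.1 hj).2
    _ ≤ ∑ j ∈ s, (if t < a j then c else 0) :=
        sum_le_sum_of_subset_of_nonneg (filter_subset _ _) fun j _ _ => hnonneg j
    _ = #{j ∈ s | t < a j} * c := by rw [← sum_filter, sum_const, nsmul_eq_mul]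

/-- Dyadic decomposition `2 ^ m * η ≤ a j < 2 ^ (m + 1) * η` of the large entries. -/
lemma sum_le_of_card_filter_lt_le (hq : 1 < q) (hη : 0 < η) (hA : 0 ≤ A)
    (hs : ∀ j ∈ s, η < a j) (hcount : ∀ t > 0, (#{j ∈ s | t < a j} : ℝ) ≤ A * t ^ (-q)) :
    ∑ j ∈ s, a j ≤ 2 ^ (q + 1) * A * η ^ (1 - q) / (1 - 2 ^ (1 - q)) := by
  have hx1 : (2 : ℝ) ^ (1 - q) < 1 := Real.rpow_lt_one_of_one_lt_of_neg one_lt_two (by linarith)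
  refine sum_le_of_sum_fiber_le_geometric (fun j => Nat.log 2 ⌊a j / η⌋₊) (by positivity)
    (by positivity) hx1 fun m => ?_
  set u : ℝ := 2 ^ m * η
  have hu : 0 < u := by positivity
  have hpow : (u / 2) ^ (-q) * (2 * u) = 2 ^ (q + 1) * u ^ (1 - q) := by
    rw [Real.div_rpow hu.le zero_le_two, Real.rpow_neg zero_le_two, div_inv_eq_mul,
      show 1 - q = -q + 1 by ring, Real.rpow_add_one hu.ne', Real.rpow_add_one two_ne_zero]
    ring
  have hu_pow : u ^ (1 - q) = (2 ^ (1 - q)) ^ m * η ^ (1 - q) := by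
    rw [Real.mul_rpow (by positivity) hη.le, Real.rpow_pow_comm zero_le_two]
  calc ∑ j ∈ s with Nat.log 2 ⌊a j / η⌋₊ = m, a j ≤ #{j ∈ s | u / 2 < a j} * (2 * u) := by
        refine sum_filter_le_card_filter_mul (by positivity) fun j hj hjm => ?_
        have h1 : 1 ≤ a j / η := (one_le_div hη).2 (hs j hj).le
        have hlo := two_pow_log_floor_le h1
        have hhi := lt_two_pow_log_floor_succ h1
        rw [hjm, le_div_iff₀ hη] at hlo
        rw [hjm, div_lt_iff₀ hη, pow_succ] at hhi
        rw [if_pos (by linarith)]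
        linarith
    _ ≤ A * (u / 2) ^ (-q) * (2 * u) := by gcongr; exact hcount _ (by positivity)
    _ = 2 ^ (q + 1) * A * η ^ (1 - q) * (2 ^ (1 - q)) ^ m := by
        rw [mul_assoc A, hpow, hu_pow]
        ring

/-- Dyadic decomposition `η / 2 ^ (m + 1) < a j ≤ η / 2 ^ m` of the small entries. -/
lemma sum_sq_le_of_card_filter_lt_le (hq : q < 2) (hη : 0 < η) (hA : 0 ≤ A)
    (hs : ∀ j ∈ s, 0 ≤ a j ∧ a j ≤ η)
    (hcount : ∀ t > 0, (#{j ∈ s | t < a j} : ℝ) ≤ A * t ^ (-q)) :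
    ∑ j ∈ s, a j ^ 2 ≤ 2 ^ q * A * η ^ (2 - q) / (1 - 2 ^ (q - 2)) := by
  have hx1 : (2 : ℝ) ^ (q - 2) < 1 := Real.rpow_lt_one_of_one_lt_of_neg one_lt_two (by linarith)
  refine sum_le_of_sum_fiber_le_geometric (fun j => Nat.log 2 ⌊η / a j⌋₊) (by positivity)
    (by positivity) hx1 fun m => ?_
  set u : ℝ := η / 2 ^ m
  have hu : 0 < u := by positivity
  have hpow : (u / 2) ^ (-q) * u ^ 2 = 2 ^ q * u ^ (2 - q) := by
    rw [Real.div_rpow hu.le zero_le_two, Real.rpow_neg zero_le_two, div_inv_eq_mul,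
      show 2 - q = -q + 2 by ring, Real.rpow_add hu, Real.rpow_two]
    ring
  have hu_pow : u ^ (2 - q) = (2 ^ (q - 2)) ^ m * η ^ (2 - q) := by
    rw [Real.div_rpow hη.le (by positivity), ← Real.rpow_pow_comm zero_le_two,
      show q - 2 = -(2 - q) by ring, Real.rpow_neg zero_le_two, inv_pow, div_eq_inv_mul]
  calc ∑ j ∈ s with Nat.log 2 ⌊η / a j⌋₊ = m, a j ^ 2 ≤ #{j ∈ s | u / 2 < a j} * u ^ 2 := by
        refine sum_filter_le_card_filter_mul (by positivity) fun j hj hjm => ?_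
        obtain ⟨ha0, haη⟩ := hs j hj
        rcases ha0.eq_or_lt with ha | ha
        · rw [← ha, zero_pow two_ne_zero]; split_ifs <;> positivity
        have h1 : 1 ≤ η / a j := (one_le_div ha).2 haη
        have hlo := two_pow_log_floor_le h1
        have hhi := lt_two_pow_log_floor_succ h1
        rw [hjm, le_div_iff₀ ha, ← le_div_iff₀' (by positivity)] at hlo
        rw [hjm, div_lt_iff₀ ha, pow_succ, ← div_lt_iff₀' (by positivity), ← div_div] at hhi
        rw [if_pos hhi]
        exact pow_le_pow_left₀ ha.le hlo 2
    _ ≤ A * (u / 2) ^ (-q) * u ^ 2 := by gcongr; exact hcount _ (by positivity)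
    _ = 2 ^ q * A * η ^ (2 - q) * (2 ^ (q - 2)) ^ m := by
        rw [mul_assoc A, hpow, hu_pow]
        ring

end WeakLq

section Orthonormal

variable {ι H : Type*} [NormedAddCommGroup H] [InnerProductSpace ℝ H] {φ : ι → H}

theorem Orthonormal.inner_sum_smul [DecidableEq ι] (hφ : Orthonormal ℝ φ) (s : Finset ι)
    (c : ι → ℝ) (i : ι) : inner ℝ (φ i) (∑ j ∈ s, c j • φ j) = if i ∈ s then c i else 0 := by
  simp only [inner_sum, real_inner_smul_right, orthonormal_iff_ite.mp hφ, mul_ite, mul_one,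
    mul_zero, sum_ite_eq]

theorem Orthonormal.norm_sum_smul_sq (hφ : Orthonormal ℝ φ) (s : Finset ι) (c : ι → ℝ) :
    ‖∑ j ∈ s, c j • φ j‖ ^ 2 = ∑ j ∈ s, c j ^ 2 := by
  rw [← real_inner_self_eq_norm_sq, hφ.inner_sum]
  simp only [conj_trivial, sq]

theorem Orthonormal.summable_inner_sq (hφ : Orthonormal ℝ φ) (g : H) :
    Summable fun i => inner ℝ (φ i) g ^ 2 := by
  simpa only [Real.norm_eq_abs, sq_abs] using hφ.inner_products_summable g

theorem Orthonormal.norm_sq_sub_sum_inner_sq_le (hφ : Orthonormal ℝ φ) (g : H) (s : Finset ι)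
    (c : ι → ℝ) :
    ‖g‖ ^ 2 - ∑ j ∈ s, inner ℝ (φ j) g ^ 2 ≤ ‖g - ∑ j ∈ s, c j • φ j‖ ^ 2 := by
  have hcross : inner ℝ g (∑ j ∈ s, c j • φ j) = ∑ j ∈ s, c j * inner ℝ (φ j) g := by
    simp only [inner_sum, real_inner_smul_right, real_inner_comm]
  have hsq : 0 ≤ ∑ j ∈ s, (c j - inner ℝ (φ j) g) ^ 2 := sum_nonneg fun _ _ => sq_nonneg _
  simp only [sub_sq, sum_add_distrib, sum_sub_distrib] at hsq
  rw [norm_sub_sq_real, hφ.norm_sum_smul_sq, hcross]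
  simp only [mul_assoc, ← mul_sum] at hsq ⊢
  linarith

/-- Bessel gives `≥`; the bound `‖g‖ ^ 2 - ∑' i, ⟪φ i, g⟫ ^ 2 ≤ ‖g - y‖ ^ 2` holds for `y` in the
span and passes to its closure, where `y = g` is allowed. -/
theorem Orthonormal.norm_sq_eq_tsum_inner_sq (hφ : Orthonormal ℝ φ)
    (hsp : (Submodule.span ℝ (Set.range φ)).topologicalClosure = ⊤) (g : H) :
    ‖g‖ ^ 2 = ∑' i, inner ℝ (φ i) g ^ 2 := by
  refine le_antisymm ?_ (by simpa only [Real.norm_eq_abs, sq_abs] using hφ.tsum_inner_products_le g)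
  have hdense := Submodule.dense_iff_topologicalClosure_eq_top.mpr hsp
  have key : ∀ y, ‖g‖ ^ 2 - ∑' i, inner ℝ (φ i) g ^ 2 ≤ ‖g - y‖ ^ 2 := by
    refine hdense.induction (fun y hy => ?_) (isClosed_le continuous_const (by fun_prop))
    obtain ⟨c, rfl⟩ := Finsupp.mem_span_range_iff_exists_finsupp.mp hy
    have hpartial := (hφ.summable_inner_sq g).sum_le_tsum c.support fun i _ => sq_nonneg _
    have := hφ.norm_sq_sub_sum_inner_sq_le g c.support c
    rw [Finsupp.sum]
    linarith
  simpa using key g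

theorem Orthonormal.norm_sub_sum_inner_sq [DecidableEq ι] (hφ : Orthonormal ℝ φ)
    (hsp : (Submodule.span ℝ (Set.range φ)).topologicalClosure = ⊤) (g : H) (s : Finset ι) :
    ‖g - ∑ j ∈ s, inner ℝ (φ j) g • φ j‖ ^ 2 = ∑' i, if i ∈ s then 0 else inner ℝ (φ i) g ^ 2 := by
  rw [hφ.norm_sq_eq_tsum_inner_sq hsp]
  congr 1 with i
  rw [inner_sub_right, hφ.inner_sum_smul]
  split_ifs <;> simp

end Orthonormal

section L1r

variable {H : Type*} [NormedAddCommGroup H] [InnerProductSpace ℝ H] {φ : ℕ → H} {r : ℝ}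

/-- The admissible constants `C` in `memL1r` and `l1rnorm`. -/
def IsL1rBound (φ : ℕ → H) (r : ℝ) (g : H) (C : ℝ) : Prop :=
  0 < C ∧ ∀ p : ℕ, 1 ≤ p →
    ∃ gp ∈ L1set φ p, l1norm φ p gp ≤ C ∧ ‖g - gp‖ ≤ C * (p : ℝ) ^ (-r)

lemma IsL1rBound.memL1r {g : H} {C : ℝ} (h : IsL1rBound φ r g C) : memL1r φ r g := ⟨C, h⟩

lemma IsL1rBound.l1rnorm_le {g : H} {C : ℝ} (h : IsL1rBound φ r g C) : l1rnorm φ r g ≤ C :=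
  csInf_le ⟨0, fun _ hC => hC.1.le⟩ h

lemma l1rnorm_nonneg (g : H) : 0 ≤ l1rnorm φ r g :=
  Real.sInf_nonneg fun _ hC => hC.1.le

lemma Fin.sum_univ_ite_mem_of_subset_range {M : Type*} [AddCommMonoid M] {t : Finset ℕ} {p : ℕ}
    (ht : t ⊆ range p) (f : ℕ → M) :
    ∑ j : Fin p, (if (j : ℕ) ∈ t then f j else 0) = ∑ j ∈ t, f j := by
  rw [Fin.sum_univ_eq_sum_range (fun j => if j ∈ t then f j else 0), sum_ite_mem,
    inter_eq_right.mpr ht]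

lemma sum_mem_L1set_of_subset_range (c : ℕ → ℝ) {t : Finset ℕ} {p : ℕ} (ht : t ⊆ range p) :
    ∑ j ∈ t, c j • φ j ∈ L1set φ p ∧ l1norm φ p (∑ j ∈ t, c j • φ j) ≤ ∑ j ∈ t, |c j| := by
  set θ : Fin p → ℝ := fun j => if (j : ℕ) ∈ t then c j else 0
  have hrep : ∑ j ∈ t, c j • φ j = ∑ j, θ j • φ j := by
    simp only [θ, ite_smul, zero_smul]
    exact (Fin.sum_univ_ite_mem_of_subset_range ht fun j => c j • φ j).symm
  have habs : ∑ j ∈ t, |c j| = ∑ j, |θ j| := by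
    simp only [θ, apply_ite abs, abs_zero]
    exact (Fin.sum_univ_ite_mem_of_subset_range ht fun j => |c j|).symm
  refine ⟨⟨θ, hrep⟩, csInf_le ⟨0, ?_⟩ ⟨θ, hrep, habs⟩⟩
  rintro _ ⟨θ, -, rfl⟩
  positivity

lemma isL1rBound_zero {C : ℝ} (hC : 0 < C) : IsL1rBound φ r 0 C := by
  refine ⟨hC, fun p _ => ⟨0, ?_⟩⟩
  obtain ⟨hmem, hle⟩ := sum_mem_L1set_of_subset_range (φ := φ) 0 (empty_subset (range p))
  simp only [sum_empty] at hmem hle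
  exact ⟨hmem, hle.trans hC.le, by simp; positivity⟩

lemma l1rnorm_zero : l1rnorm φ r 0 = 0 :=
  le_antisymm (le_of_forall_gt_imp_ge_of_dense fun _ hC => (isL1rBound_zero hC).l1rnorm_le)
    (l1rnorm_nonneg 0)

/-- The truncations `∑ j ∈ s with j < p` are the approximants from `L1(D_p)`. -/
lemma Orthonormal.isL1rBound_sum (hφ : Orthonormal ℝ φ) (s : Finset ℕ) (c : ℕ → ℝ) {B : ℝ}
    (hB : 0 < B) (htail : ∀ p : ℕ, 1 ≤ p → ∑ j ∈ s with p ≤ j, c j ^ 2 ≤ (B * (p : ℝ) ^ (-r)) ^ 2) :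
    IsL1rBound φ r (∑ j ∈ s, c j • φ j) (max (∑ j ∈ s, |c j|) B) := by
  refine ⟨lt_max_of_lt_right hB, fun p hp => ?_⟩
  obtain ⟨hmem, hl1⟩ := sum_mem_L1set_of_subset_range (φ := φ) c (t := s.filter (· < p))
    fun j hj => mem_range.mpr (mem_filter.mp hj).2
  refine ⟨_, hmem, hl1.trans <| (sum_le_sum_of_subset_of_nonneg (filter_subset _ _)
    fun _ _ _ => abs_nonneg _).trans (le_max_left _ _), ?_⟩
  have hdiff : ∑ j ∈ s, c j • φ j - ∑ j ∈ s with j < p, c j • φ j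
      = ∑ j ∈ s with p ≤ j, c j • φ j := by
    rw [← sum_filter_add_sum_filter_not s (· < p)]
    simp only [not_lt, add_sub_cancel_left]
  rw [hdiff]
  refine le_of_pow_le_pow_left₀ two_ne_zero (by positivity) ?_
  rw [hφ.norm_sum_smul_sq]
  exact (htail p hp).trans (by gcongr; exact le_max_right _ _)

end L1r

section CoefficientClasses

variable {H : Type*} [NormedAddCommGroup H] [InnerProductSpace ℝ H] {φ : ℕ → H} {q r R : ℝ}
  {g : H}

lemma inBesov.tail_le (hB : inBesov φ r R g) (hr : 0 ≤ r) {p : ℕ} {x : ℝ} (hx : 0 < x)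
    (hxp : x ≤ p) : ∑' j, (if p ≤ j then inner ℝ (φ j) g ^ 2 else 0) ≤ (R * x ^ (-r)) ^ 2 := by
  have htail : 0 ≤ ∑' j, (if p ≤ j then inner ℝ (φ j) g ^ 2 else 0) :=
    tsum_nonneg fun j => by split_ifs <;> positivity
  have hsq : (R * x ^ (-r)) ^ 2 = R ^ 2 / x ^ (2 * r) := by
    rw [mul_pow, ← Real.rpow_mul_natCast hx.le,
      show -r * ((2 : ℕ) : ℝ) = -(2 * r) by push_cast; ring, Real.rpow_neg hx.le, div_eq_mul_inv]
  rw [hsq, le_div_iff₀ (by positivity)]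
  calc _ ≤ (∑' j, if p ≤ j then inner ℝ (φ j) g ^ 2 else 0) * ((p : ℝ) + 1) ^ (2 * r) := by
        gcongr
        linarith
    _ ≤ R ^ 2 := by rw [mul_comm]; exact hB p

lemma inBesov.sum_filter_le (hφ : Orthonormal ℝ φ) (hB : inBesov φ r R g) (hr : 0 ≤ r)
    (t : Finset ℕ) {p : ℕ} {x : ℝ} (hx : 0 < x) (hxp : x ≤ p) :
    ∑ j ∈ t with p ≤ j, inner ℝ (φ j) g ^ 2 ≤ (R * x ^ (-r)) ^ 2 := by
  have hsum : Summable fun j => if p ≤ j then inner ℝ (φ j) g ^ 2 else 0 :=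
    (hφ.summable_inner_sq g).of_nonneg_of_le (fun j => by split_ifs <;> positivity)
      fun j => by split_ifs <;> simp [sq_nonneg]
  rw [sum_filter]
  exact (hsum.sum_le_tsum t fun j _ => by split_ifs <;> positivity).trans (hB.tail_le hr hx hxp)

lemma inBesov.norm_le (hφ : Orthonormal ℝ φ)
    (hsp : (Submodule.span ℝ (Set.range φ)).topologicalClosure = ⊤) (hB : inBesov φ r R g)
    (hR : 0 ≤ R) : ‖g‖ ≤ R := by
  refine le_of_pow_le_pow_left₀ two_ne_zero hR ?_
  rw [hφ.norm_sq_eq_tsum_inner_sq hsp]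
  simpa using hB 0

lemma inwlq.card_filter_le (hw : inwlq φ q R g) (s : Finset ℕ) {t : ℝ} (ht : 0 < t) :
    (#{j ∈ s | t < |inner ℝ (φ j) g|} : ℝ) ≤ R ^ q * t ^ (-q) := by
  obtain ⟨hfin, hcard⟩ := hw t ht
  have hsub : ((s.filter fun j => t < |inner ℝ (φ j) g|) : Set ℕ) ⊆
      {j | t < |inner ℝ (φ j) g|} := fun j hj => (mem_filter.mp hj).2
  have hle := Set.ncard_le_ncard hsub hfin
  rw [Set.ncard_coe_finset] at hle
  rw [Real.rpow_neg ht.le, ← div_eq_mul_inv, le_div_iff₀ (by positivity)]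
  calc _ ≤ ({j | t < |inner ℝ (φ j) g|}.ncard : ℝ) * t ^ q := by gcongr
    _ ≤ R ^ q := by linarith

lemma inLq.inwlq (hq : 0 < q) (h : inLq φ q R g) : inwlq φ q R g := by
  intro η hη
  have hfin : {j | η < |inner ℝ (φ j) g|}.Finite := by
    have hsmall := h.1.tendsto_cofinite_zero.eventually (gt_mem_nhds (Real.rpow_pos_of_pos hη q))
    refine (Filter.eventually_cofinite.mp hsmall).subset fun j hj => ?_
    simp only [Set.mem_ofPred_eq, not_lt] at hj ⊢
    exact Real.rpow_le_rpow hη.le hj.le hq.le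
  refine ⟨hfin, ?_⟩
  calc η ^ q * ({j | η < |inner ℝ (φ j) g|}.ncard : ℝ) = ∑ _j ∈ hfin.toFinset, η ^ q := by
        rw [Set.ncard_eq_toFinset_card _ hfin, sum_const, nsmul_eq_mul, mul_comm]
    _ ≤ ∑ j ∈ hfin.toFinset, |inner ℝ (φ j) g| ^ q :=
        sum_le_sum fun j hj => Real.rpow_le_rpow hη.le (hfin.mem_toFinset.mp hj).le hq.le
    _ ≤ ∑' j, |inner ℝ (φ j) g| ^ q := h.1.sum_le_tsum _ fun j _ => by positivity
    _ ≤ R ^ q := h.2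

end CoefficientClasses

section Interpolation

variable {H : Type*} [NormedAddCommGroup H] [InnerProductSpace ℝ H] {φ : ℕ → H} {q r R : ℝ}
  {g : H}

/-- The two error terms come from the dropped coefficients with `|⟪φ j, g⟫| ≤ η` and with
`p ≤ j`. -/
lemma Orthonormal.norm_sub_sum_large_sq_le (hφ : Orthonormal ℝ φ)
    (hsp : (Submodule.span ℝ (Set.range φ)).topologicalClosure = ⊤) (hw : inwlq φ q R g)
    (hB : inBesov φ r R g) (hq : q < 2) (hr : 0 ≤ r) (hR : 0 ≤ R) {η : ℝ} (hη : 0 < η) {p : ℕ}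
    {x : ℝ} (hx : 0 < x) (hxp : x ≤ p) :
    ‖g - ∑ j ∈ range p with η < |inner ℝ (φ j) g|, inner ℝ (φ j) g • φ j‖ ^ 2 ≤
      2 ^ q * R ^ q * η ^ (2 - q) / (1 - 2 ^ (q - 2)) + (R * x ^ (-r)) ^ 2 := by
  have hx1 : (2 : ℝ) ^ (q - 2) < 1 := Real.rpow_lt_one_of_one_lt_of_neg one_lt_two (by linarith)
  rw [hφ.norm_sub_sum_inner_sq hsp]
  refine tsum_le_of_sum_le' (by have := sub_pos.2 hx1; positivity) fun t => ?_
  have hsmall : ∑ j ∈ t with |inner ℝ (φ j) g| ≤ η, inner ℝ (φ j) g ^ 2 ≤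
      2 ^ q * R ^ q * η ^ (2 - q) / (1 - 2 ^ (q - 2)) := by
    simpa only [sq_abs] using sum_sq_le_of_card_filter_lt_le (a := fun j => |inner ℝ (φ j) g|)
      hq hη (by positivity) (fun j hj => ⟨abs_nonneg _, (mem_filter.mp hj).2⟩)
      fun _ ht => hw.card_filter_le _ ht
  have hsplit (j : ℕ) :
      (if j ∈ (range p).filter (fun i => η < |inner ℝ (φ i) g|) then 0 else inner ℝ (φ j) g ^ 2)
        ≤ (if |inner ℝ (φ j) g| ≤ η then inner ℝ (φ j) g ^ 2 else 0) +
          (if p ≤ j then inner ℝ (φ j) g ^ 2 else 0) := by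
    have := sq_nonneg (inner ℝ (φ j) g)
    simp only [mem_filter, mem_range, ← not_le]
    by_cases hj : p ≤ j <;> by_cases hθ : |inner ℝ (φ j) g| ≤ η <;> simp [hj, hθ, this]
  calc _ ≤ ∑ j ∈ t, ((if |inner ℝ (φ j) g| ≤ η then inner ℝ (φ j) g ^ 2 else 0) +
          (if p ≤ j then inner ℝ (φ j) g ^ 2 else 0)) := sum_le_sum fun j _ => hsplit j
    _ = ∑ j ∈ t with |inner ℝ (φ j) g| ≤ η, inner ℝ (φ j) g ^ 2 +
          ∑ j ∈ t with p ≤ j, inner ℝ (φ j) g ^ 2 := by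
        rw [sum_add_distrib, sum_filter, sum_filter]
    _ ≤ _ := add_le_add hsmall (hB.sum_filter_le hφ hr t hx hxp)

/-- `C_{q,r}`: the first term bounds the approximation error and the other two the
`L_{1,r}` norm of the approximant. -/
def bqrConst (q : ℝ) : ℝ :=
  √(2 ^ q / (1 - 2 ^ (q - 2)) + 1) + 2 ^ (q + 1) / (1 - 2 ^ (1 - q)) + 1

lemma one_le_bqrConst (hq : 1 < q) : 1 ≤ bqrConst q := by
  have : 0 < 1 - (2 : ℝ) ^ (1 - q) :=
    sub_pos.2 (Real.rpow_lt_one_of_one_lt_of_neg one_lt_two (by linarith))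
  unfold bqrConst
  have : 0 ≤ (2 : ℝ) ^ (q + 1) / (1 - 2 ^ (1 - q)) := by positivity
  linarith [Real.sqrt_nonneg (2 ^ q / (1 - 2 ^ (q - 2)) + 1)]

lemma rpow_mul_threshold {δ : ℝ} (hR : 0 < R) (hδ : 0 < δ) (y : ℝ) :
    R ^ q * (R * δ ^ (2 / q)) ^ y = R ^ (q + y) * δ ^ (2 / q * y) := by
  rw [Real.mul_rpow hR.le (by positivity), ← Real.rpow_mul hδ.le, ← mul_assoc,
    ← Real.rpow_add hR]

lemma inwlq.sum_abs_inner_le (hw : inwlq φ q R g) (hq : 1 < q) (hR : 0 < R) {δ : ℝ}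
    (hδ : 0 < δ) {S : Finset ℕ} (hS : ∀ j ∈ S, R * δ ^ (2 / q) < |inner ℝ (φ j) g|) :
    ∑ j ∈ S, |inner ℝ (φ j) g| ≤
      2 ^ (q + 1) / (1 - 2 ^ (1 - q)) * R * δ ^ (2 * (1 / q - 1 / 2) - 1) := by
  refine (sum_le_of_card_filter_lt_le hq (by positivity) (by positivity) hS
    fun _ ht => hw.card_filter_le S ht).trans_eq ?_
  rw [mul_assoc _ (R ^ q), rpow_mul_threshold hR hδ, show q + (1 - q) = 1 by ring,
    show 2 / q * (1 - q) = 2 * (1 / q - 1 / 2) - 1 by field_simp; ring, Real.rpow_one]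
  ring

lemma Orthonormal.norm_sub_sum_large_le (hφ : Orthonormal ℝ φ)
    (hsp : (Submodule.span ℝ (Set.range φ)).topologicalClosure = ⊤) (hw : inwlq φ q R g)
    (hB : inBesov φ r R g) (hq0 : 0 < q) (hq : q < 2) (hr : 0 < r) (hR : 0 < R) {δ : ℝ}
    (hδ : 0 < δ) :
    ‖g - ∑ j ∈ range ⌈δ ^ (-(2 * (1 / q - 1 / 2) / r))⌉₊ with R * δ ^ (2 / q) < |inner ℝ (φ j) g|,
        inner ℝ (φ j) g • φ j‖ ≤
      √(2 ^ q / (1 - 2 ^ (q - 2)) + 1) * R * δ ^ (2 * (1 / q - 1 / 2)) := by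
  set e := 2 * (1 / q - 1 / 2)
  have hK : 0 < 2 ^ q / (1 - 2 ^ (q - 2)) + (1 : ℝ) := by
    have := sub_pos.2 (Real.rpow_lt_one_of_one_lt_of_neg one_lt_two (by linarith : q - 2 < 0))
    positivity
  refine le_of_pow_le_pow_left₀ two_ne_zero (by positivity) <|
    (hφ.norm_sub_sum_large_sq_le hsp hw hB hq hr.le hR.le (by positivity) (by positivity)
      (Nat.le_ceil _)).trans_eq ?_
  rw [mul_assoc _ (R ^ q), rpow_mul_threshold hR hδ, show q + (2 - q) = 2 by ring,
    show 2 / q * (2 - q) = e * (2 : ℕ) by simp only [e]; push_cast; field_simp,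
    ← Real.rpow_mul hδ.le, show -(e / r) * -r = e by field_simp, Real.rpow_mul_natCast hδ.le,
    Real.rpow_two]
  simp only [mul_pow, Real.sq_sqrt hK.le]
  ring

/-- For `δ < 1` the approximant keeps the coefficients above `η = R δ ^ (2 / q)` among the first
`p = ⌈δ ^ (-e / r)⌉` ones, where `e = 2 (1 / q - 1 / 2)`; both choices balance the two terms
against `R δ ^ e`. -/
lemma exists_memL1r_approx (hφ : Orthonormal ℝ φ)
    (hsp : (Submodule.span ℝ (Set.range φ)).topologicalClosure = ⊤) (hq1 : 1 < q) (hq2 : q < 2)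
    (hr : 0 < r) (hR : 0 < R) (hw : inwlq φ q R g) (hB : inBesov φ r R g) {δ : ℝ} (hδ0 : 0 < δ)
    (hδ1 : δ < 1) :
    ∃ h, memL1r φ r h ∧
      ‖g - h‖ + δ * l1rnorm φ r h ≤ bqrConst q * R * δ ^ (2 * (1 / q - 1 / 2)) := by
  set e := 2 * (1 / q - 1 / 2)
  set S := (range ⌈δ ^ (-(e / r))⌉₊).filter fun j => R * δ ^ (2 / q) < |inner ℝ (φ j) g|
  set K₁ : ℝ := 2 ^ (q + 1) / (1 - 2 ^ (1 - q))
  have hK₁ : 0 ≤ K₁ := by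
    have := sub_pos.2 (Real.rpow_lt_one_of_one_lt_of_neg one_lt_two (by linarith : 1 - q < 0))
    positivity
  have hbound : IsL1rBound φ r (∑ j ∈ S, inner ℝ (φ j) g • φ j)
      (max (∑ j ∈ S, |inner ℝ (φ j) g|) R) :=
    hφ.isL1rBound_sum S _ hR fun p hp => hB.sum_filter_le hφ hr.le S (by positivity) le_rfl
  have hl1 : ∑ j ∈ S, |inner ℝ (φ j) g| ≤ K₁ * R * δ ^ (e - 1) :=
    hw.sum_abs_inner_le hq1 hR hδ0 fun j hj => (mem_filter.mp hj).2
  have he : e ≤ 1 := by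
    simp only [e]
    linarith [(div_lt_one (by linarith : (0 : ℝ) < q)).2 hq1]
  have hδe : δ ≤ δ ^ e := by
    simpa using Real.rpow_le_rpow_of_exponent_ge hδ0 hδ1.le he
  have hδpow : δ * δ ^ (e - 1) = δ ^ e := by
    rw [mul_comm, ← Real.rpow_add_one hδ0.ne', sub_add_cancel]
  refine ⟨_, hbound.memL1r, ?_⟩
  calc _ ≤ √(2 ^ q / (1 - 2 ^ (q - 2)) + 1) * R * δ ^ e + δ * (K₁ * R * δ ^ (e - 1) + R) := by
        gcongr
        · exact hφ.norm_sub_sum_large_le hsp hw hB (by linarith) hq2 hr hR hδ0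
        refine hbound.l1rnorm_le.trans (max_le (hl1.trans (le_add_of_nonneg_right hR.le)) ?_)
        exact le_add_of_nonneg_left (by positivity)
    _ = √(2 ^ q / (1 - 2 ^ (q - 2)) + 1) * R * δ ^ e + (K₁ * R * δ ^ e + R * δ) := by
        rw [← hδpow]
        ring
    _ ≤ √(2 ^ q / (1 - 2 ^ (q - 2)) + 1) * R * δ ^ e + (K₁ * R * δ ^ e + R * δ ^ e) := by gcongr
    _ = bqrConst q * R * δ ^ e := by
        simp only [bqrConst, K₁]
        ring

theorem memBqr_of_inwlq_of_inBesov (hφ : Orthonormal ℝ φ)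
    (hsp : (Submodule.span ℝ (Set.range φ)).topologicalClosure = ⊤) (hq1 : 1 < q) (hq2 : q < 2)
    (hr : 0 < r) (hR : 0 < R) (hw : inwlq φ q R g) (hB : inBesov φ r R g) :
    memBqr φ q r (bqrConst q * R) g := by
  intro δ hδ
  have hbdd : BddBelow (Set.range fun h : {h : H // memL1r φ r h} =>
      ‖g - (h : H)‖ + δ * l1rnorm φ r (h : H)) := by
    refine ⟨0, ?_⟩
    rintro _ ⟨h, rfl⟩
    have := l1rnorm_nonneg (φ := φ) (r := r) (h : H)
    positivity
  rcases lt_or_ge δ 1 with hδ1 | hδ1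
  · obtain ⟨h, hmem, hle⟩ := exists_memL1r_approx hφ hsp hq1 hq2 hr hR hw hB hδ hδ1
    exact ciInf_le_of_le hbdd ⟨h, hmem⟩ hle
  · refine ciInf_le_of_le hbdd ⟨0, (isL1rBound_zero one_pos).memL1r⟩ ?_
    simp only [sub_zero, l1rnorm_zero, mul_zero, add_zero]
    have he : 0 ≤ 2 * (1 / q - 1 / 2) := by
      have := (one_div_lt_one_div (by norm_num) (by linarith)).2 hq2
      linarith
    calc ‖g‖ ≤ R := hB.norm_le hφ hsp hR.le
      _ = 1 * R * 1 := by ring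
      _ ≤ bqrConst q * R * δ ^ (2 * (1 / q - 1 / 2)) := by
        have := one_le_bqrConst hq1
        gcongr
        exact Real.one_le_rpow hδ1 he

end Interpolation

/-- In the orthonormal case, `wℓ_q(R) ∩ B^r_{2,∞}(R) ⊆ B_{q,r}(C_{q,r} R)`; in
particular, since `L_q(R) ⊆ wℓ_q(R)`, also `L_q(R) ∩ B^r_{2,∞}(R) ⊆ B_{q,r}(C_{q,r} R)`. -/
theorem statement_12 :
    ∀ q r : ℝ, 1 < q → q < 2 → 0 < r →
    ∃ C : ℝ, 0 < C ∧
      ∀ R : ℝ, 0 < R →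
      ∀ (H : Type) [NormedAddCommGroup H] [InnerProductSpace ℝ H]
        (φ : ℕ → H), Orthonormal ℝ φ →
        (Submodule.span ℝ (Set.range φ)).topologicalClosure = ⊤ →
        (∀ g : H, inwlq φ q R g → inBesov φ r R g → memBqr φ q r (C * R) g) ∧
        (∀ g : H, inLq φ q R g → inwlq φ q R g) ∧
        (∀ g : H, inLq φ q R g → inBesov φ r R g → memBqr φ q r (C * R) g) := by
  intro q r hq1 hq2 hr
  refine ⟨bqrConst q, zero_lt_one.trans_le (one_le_bqrConst hq1), fun R hR H _ _ φ hφ hsp => ?_⟩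
  have hweak : ∀ g : H, inLq φ q R g → inwlq φ q R g := fun g => inLq.inwlq (by linarith)
  have hmain : ∀ g : H, inwlq φ q R g → inBesov φ r R g → memBqr φ q r (bqrConst q * R) g :=
    fun g => memBqr_of_inwlq_of_inBesov hφ hsp hq1 hq2 hr hR
  exact ⟨hmain, hweak, fun g hg => hmain g (hweak g hg)⟩
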